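/- arXiv:1509.01959 — 5 statements merged into one kernel-verified Lean document; each statement's English description precedes it below -/
import Mathlib

section
/- Let p, q, k, m, c be real numbers with c·(p+q) ≠ 0 and c + k = 4k²m, let a₀ be any real number, and define u(x,y,t) = a₀ + (12km/(c(p+q)))·tanh(ct + kx + my). Then u is smooth on ℝ³ and satisfies the shallow water wave equation u_{xt} + u_{xx} = u_{xxxy} + p·u_x·u_{xt} + q·u_t·u_{xx} at every point (x,y,t) ∈ ℝ³. -/

lemma tanh_hasDerivAt (x : ℝ) : HasDerivAt Real.tanh (1 - Real.tanh x ^ 2) x := by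
  have h : HasDerivAt (fun y => Real.sinh y / Real.cosh y)
      ((Real.cosh x * Real.cosh x - Real.sinh x * Real.sinh x) / Real.cosh x ^ 2) x :=
    (Real.hasDerivAt_sinh x).div (Real.hasDerivAt_cosh x) (Real.cosh_pos x).ne'
  have hfun : Real.tanh = fun y => Real.sinh y / Real.cosh y :=
    funext fun y => Real.tanh_eq_sinh_div_cosh y
  rw [hfun]
  convert h using 1
  have h1 := Real.cosh_sq_sub_sinh_sq x
  have hc := (Real.cosh_pos x).ne'
  field_simp

lemma contDiff_tanh' : ContDiff ℝ (⊤ : ℕ∞) Real.tanh := by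
  have hfun : Real.tanh = fun y => Real.sinh y / Real.cosh y :=
    funext fun y => Real.tanh_eq_sinh_div_cosh y
  rw [hfun]
  exact Real.contDiff_sinh.div Real.contDiff_cosh fun x => (Real.cosh_pos x).ne'

lemma tanh_affine (α β x : ℝ) :
    HasDerivAt (fun s => Real.tanh (α * s + β)) (α - α * Real.tanh (α * x + β) ^ 2) x := by
  have h := (tanh_hasDerivAt (α * x + β)).comp x
    (((hasDerivAt_id x).const_mul α).add_const β)
  refine h.congr_deriv ?_
  ring

/-- For c(p+q) ≠ 0 and c + k = 4k²m, the function
u(x,y,t) = a₀ + (12km/(c(p+q)))·tanh(ct+kx+my) is smooth on ℝ³ and satisfies the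
shallow water wave equation u_{xt} + u_{xx} = u_{xxxy} + p·u_x·u_{xt} + q·u_t·u_{xx}
at every point. -/
theorem tanh_solution_of_SWW (p q k m c a₀ : ℝ)
    (h1 : c * (p + q) ≠ 0) (h2 : c + k = 4 * k ^ 2 * m)
    (u : ℝ → ℝ → ℝ → ℝ)
    (hu : ∀ x y t : ℝ,
      u x y t = a₀ + (12 * k * m / (c * (p + q))) * Real.tanh (c * t + k * x + m * y)) :
    ContDiff ℝ (⊤ : ℕ∞) (fun P : ℝ × ℝ × ℝ => u P.1 P.2.1 P.2.2) ∧
    ∀ x y t : ℝ,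
      deriv (fun x' : ℝ => deriv (fun t' : ℝ => u x' y t') t) x
          + deriv (deriv (fun x' : ℝ => u x' y t)) x =
        deriv (deriv (deriv (fun x' : ℝ => deriv (fun y' : ℝ => u x' y' t) y))) x
          + p * deriv (fun x' : ℝ => u x' y t) x
              * deriv (fun x' : ℝ => deriv (fun t' : ℝ => u x' y t') t) x
          + q * deriv (fun t' : ℝ => u x y t') t
              * deriv (deriv (fun x' : ℝ => u x' y t)) x := by
  obtain ⟨A, hAdef⟩ : ∃ A : ℝ, A = 12 * k * m / (c * (p + q)) := ⟨_, rfl⟩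
  have hu' : ∀ x y t : ℝ, u x y t = a₀ + A * Real.tanh (c * t + k * x + m * y) := by
    intro x y t; rw [hu, hAdef]
  have hA : A * (c * (p + q)) = 12 * k * m := by
    rw [hAdef, div_mul_cancel₀ _ h1]
  constructor
  · have hfun : (fun P : ℝ × ℝ × ℝ => u P.1 P.2.1 P.2.2)
        = fun P : ℝ × ℝ × ℝ => a₀ + A * Real.tanh (c * P.2.2 + k * P.1 + m * P.2.1) :=
      funext fun P => hu' P.1 P.2.1 P.2.2
    rw [hfun]
    have hl : ContDiff ℝ (⊤ : ℕ∞) (fun P : ℝ × ℝ × ℝ => c * P.2.2 + k * P.1 + m * P.2.1) := by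
      fun_prop
    exact contDiff_const.add (contDiff_const.mul (contDiff_tanh'.comp hl))
  · intro x y t
    -- basic derivative of tanh in each direction
    have hEx : ∀ X : ℝ, HasDerivAt (fun s => Real.tanh (c * t + k * s + m * y))
        (k - k * Real.tanh (c * t + k * X + m * y) ^ 2) X := by
      intro X
      have e : ∀ s : ℝ, k * s + (c * t + m * y) = c * t + k * s + m * y := fun s => by ring
      simpa only [e] using tanh_affine k (c * t + m * y) X
    -- u_t as a function of x'
    have hut : ∀ X : ℝ, deriv (fun t' => u X y t') t
        = A * c - A * c * Real.tanh (c * t + k * X + m * y) ^ 2 := by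
      intro X
      have e : ∀ s : ℝ, c * s + (k * X + m * y) = c * s + k * X + m * y := fun s => by ring
      have h := ((tanh_affine c (k * X + m * y) t).const_mul A).const_add a₀
      simp only [e] at h
      have hfun : (fun t' => u X y t')
          = fun t' => a₀ + A * Real.tanh (c * t' + k * X + m * y) :=
        funext fun t' => hu' X y t'
      rw [hfun]
      rw [h.deriv]; ring
    -- u_y as a function of x'
    have huy : ∀ X : ℝ, deriv (fun y' => u X y' t) y
        = A * m - A * m * Real.tanh (c * t + k * X + m * y) ^ 2 := by
      intro X
      have e : ∀ s : ℝ, m * s + (c * t + k * X) = c * t + k * X + m * s := fun s => by ring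
      have h := ((tanh_affine m (c * t + k * X) y).const_mul A).const_add a₀
      simp only [e] at h
      have hfun : (fun y' => u X y' t)
          = fun y' => a₀ + A * Real.tanh (c * t + k * X + m * y') :=
        funext fun y' => hu' X y' t
      rw [hfun]
      rw [h.deriv]; ring
    -- u_x as a function of x' (as deriv equation)
    have hux : ∀ X : ℝ, deriv (fun x' => u x' y t) X
        = A * k - A * k * Real.tanh (c * t + k * X + m * y) ^ 2 := by
      intro X
      have h := ((hEx X).const_mul A).const_add a₀
      have hfun : (fun x' => u x' y t)
          = fun x' => a₀ + A * Real.tanh (c * t + k * x' + m * y) :=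
        funext fun x' => hu' x' y t
      rw [hfun]
      rw [h.deriv]; ring
    -- generic: derivative of X ↦ b1 - b2 * tanh(θ X)^2
    have hD2 : ∀ (b1 b2 : ℝ) (X : ℝ), HasDerivAt
        (fun s => b1 - b2 * Real.tanh (c * t + k * s + m * y) ^ 2)
        (-2 * b2 * k * Real.tanh (c * t + k * X + m * y)
          + 2 * b2 * k * Real.tanh (c * t + k * X + m * y) ^ 3) X := by
      intro b1 b2 X
      have h := (((hEx X).pow 2).const_mul b2).const_sub b1
      refine h.congr_deriv ?_
      push_cast; ring
    -- u_xt
    have huxt : deriv (fun x' : ℝ => deriv (fun t' : ℝ => u x' y t') t) x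
        = -2 * (A * c) * k * Real.tanh (c * t + k * x + m * y)
          + 2 * (A * c) * k * Real.tanh (c * t + k * x + m * y) ^ 3 := by
      have hfun : (fun x' : ℝ => deriv (fun t' : ℝ => u x' y t') t)
          = fun x' => A * c - A * c * Real.tanh (c * t + k * x' + m * y) ^ 2 :=
        funext fun X => hut X
      rw [hfun, (hD2 (A * c) (A * c) x).deriv]
    -- u_xx
    have hdx : deriv (fun x' : ℝ => u x' y t)
        = fun x' => A * k - A * k * Real.tanh (c * t + k * x' + m * y) ^ 2 :=
      funext fun X => hux X
    have huxx : deriv (deriv (fun x' : ℝ => u x' y t)) x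
        = -2 * (A * k) * k * Real.tanh (c * t + k * x + m * y)
          + 2 * (A * k) * k * Real.tanh (c * t + k * x + m * y) ^ 3 := by
      rw [hdx, (hD2 (A * k) (A * k) x).deriv]
    -- fourth order term
    have hg1 : (fun x' : ℝ => deriv (fun y' : ℝ => u x' y' t) y)
        = fun x' => A * m - A * m * Real.tanh (c * t + k * x' + m * y) ^ 2 :=
      funext fun X => huy X
    have hg2 : deriv (fun x' => A * m - A * m * Real.tanh (c * t + k * x' + m * y) ^ 2)
        = fun x' => -2 * (A * m) * k * Real.tanh (c * t + k * x' + m * y)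
          + 2 * (A * m) * k * Real.tanh (c * t + k * x' + m * y) ^ 3 :=
      funext fun X => (hD2 (A * m) (A * m) X).deriv
    have hH2 : ∀ X : ℝ, HasDerivAt
        (fun x' => -2 * (A * m) * k * Real.tanh (c * t + k * x' + m * y)
          + 2 * (A * m) * k * Real.tanh (c * t + k * x' + m * y) ^ 3)
        (-2 * A * m * k ^ 2 + 8 * A * m * k ^ 2 * Real.tanh (c * t + k * X + m * y) ^ 2
          - 6 * A * m * k ^ 2 * Real.tanh (c * t + k * X + m * y) ^ 4) X := by
      intro X
      have h := ((hEx X).const_mul (-2 * (A * m) * k)).add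
        (((hEx X).pow 3).const_mul (2 * (A * m) * k))
      refine h.congr_deriv ?_
      push_cast; ring
    have hg3 : deriv (fun x' => -2 * (A * m) * k * Real.tanh (c * t + k * x' + m * y)
          + 2 * (A * m) * k * Real.tanh (c * t + k * x' + m * y) ^ 3)
        = fun X => -2 * A * m * k ^ 2 + 8 * A * m * k ^ 2 * Real.tanh (c * t + k * X + m * y) ^ 2
          - 6 * A * m * k ^ 2 * Real.tanh (c * t + k * X + m * y) ^ 4 :=
      funext fun X => (hH2 X).deriv
    have hH3 : HasDerivAt
        (fun X => -2 * A * m * k ^ 2 + 8 * A * m * k ^ 2 * Real.tanh (c * t + k * X + m * y) ^ 2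
          - 6 * A * m * k ^ 2 * Real.tanh (c * t + k * X + m * y) ^ 4)
        (16 * A * m * k ^ 3 * Real.tanh (c * t + k * x + m * y)
          - 40 * A * m * k ^ 3 * Real.tanh (c * t + k * x + m * y) ^ 3
          + 24 * A * m * k ^ 3 * Real.tanh (c * t + k * x + m * y) ^ 5) x := by
      have h := ((((hEx x).pow 2).const_mul (8 * A * m * k ^ 2)).const_add
          (-2 * A * m * k ^ 2)).sub (((hEx x).pow 4).const_mul (6 * A * m * k ^ 2))
      refine h.congr_deriv ?_
      push_cast; ring
    have huxxxy : deriv (deriv (deriv (fun x' : ℝ => deriv (fun y' : ℝ => u x' y' t) y))) x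
        = 16 * A * m * k ^ 3 * Real.tanh (c * t + k * x + m * y)
          - 40 * A * m * k ^ 3 * Real.tanh (c * t + k * x + m * y) ^ 3
          + 24 * A * m * k ^ 3 * Real.tanh (c * t + k * x + m * y) ^ 5 := by
      rw [hg1, hg2, hg3, hH3.deriv]
    rw [huxt, huxx, huxxxy, hux x, hut x]
    set E := Real.tanh (c * t + k * x + m * y)
    linear_combination (-2 * A * k * E * (1 - E ^ 2)) * h2
      + (2 * A * k ^ 2 * E * (1 - E ^ 2) ^ 2) * hA
end

section
/- Let σ, p, q, k, m, c be real numbers with c·(p+q) ≠ 0 and c + k + 4σk²m = 0, let a₀ ∈ ℝ, let I ⊆ ℝ be an open set, and let Φ : ℝ → ℝ be differentiable on I with Φ'(ξ) = σ + Φ(ξ)² for all ξ ∈ I. Define u(x,y,t) = a₀ - (12km/(c(p+q)))·Φ(ct + kx + my). Then u satisfies the shallow water wave equation u_{xt} + u_{xx} = u_{xxxy} + p·u_x·u_{xt} + q·u_t·u_{xx} at every point (x,y,t) with ct + kx + my ∈ I (where moreover Φ is four times differentiable on I, as follows automatically from the Riccati equation). -/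
/-!
A travelling wave `u = W(ct + kx + my)` turns the SWW equation into the ODE
`k ((c + k) W'' - k²m W'''' - (p + q) k c W' W'') = 0` in `ξ = ct + kx + my`.
Along a solution of `Φ' = P(Φ)` every derivative of `Φ` is a polynomial in `Φ`; for the Riccati
polynomial `Φ'' = 2ΦΦ'` and `Φ'''' = 8ΦΦ'(2σ + 3Φ²)`. For `W = a₀ - AΦ` with `Ac(p + q) = 12km`
the bracket then collapses to `-2AΦΦ'(c + k + 4σk²m)`, which vanishes.
-/

open Polynomial Set Filter

section IteratedDeriv

variable {𝕜 : Type*} [NontriviallyNormedField 𝕜]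

theorem deriv_comp_mul_add (F : 𝕜 → 𝕜) (a b : 𝕜) :
    deriv (fun x => F (a * x + b)) = fun x => a * deriv F (a * x + b) := by
  funext x
  simpa [deriv_comp_add_const] using deriv_comp_mul_left (f := fun z => F (z + b)) (c := a) (x := x)

theorem deriv_iterate_comp_mul_add (F : 𝕜 → 𝕜) (a b : 𝕜) (n : ℕ) :
    deriv^[n] (fun x => F (a * x + b)) = fun x => a ^ n * deriv^[n] F (a * x + b) := by
  induction n with
  | zero => simp
  | succ n ih =>
    rw [Function.iterate_succ_apply', ih, deriv_const_mul_field', deriv_comp_mul_add,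
      ← Function.iterate_succ_apply' deriv]
    funext x
    ring

theorem deriv_iterate_const_sub_mul {n : ℕ} (hn : 0 < n) (a b : 𝕜) (f : 𝕜 → 𝕜) :
    deriv^[n] (fun x => a - b * f x) = fun x => -b * deriv^[n] f x := by
  funext x
  simp only [← iteratedDeriv_eq_iterate]
  rw [iteratedDeriv_const_sub hn, iteratedDeriv_neg, iteratedDeriv_const_mul_field, neg_mul]

theorem deriv_iterate_const_mul (a : 𝕜) (f : 𝕜 → 𝕜) (n : ℕ) :
    deriv^[n] (fun x => a * f x) = fun x => a * deriv^[n] f x := by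
  funext x
  simp only [← iteratedDeriv_eq_iterate, iteratedDeriv_const_mul_field]

end IteratedDeriv

section TravelingWave

variable {𝕜 : Type*} [NontriviallyNormedField 𝕜] {W : 𝕜 → 𝕜} {u : 𝕜 → 𝕜 → 𝕜 → 𝕜} {c k m : 𝕜}

theorem deriv_iterate_x_of_travelingWave (hu : ∀ x y t, u x y t = W (c * t + k * x + m * y))
    (n : ℕ) (y t : 𝕜) :
    deriv^[n] (fun x => u x y t) = fun x => k ^ n * deriv^[n] W (c * t + k * x + m * y) := by
  have hslice : (fun x => u x y t) = fun x => W (k * x + (c * t + m * y)) := by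
    funext x; rw [hu]; ring_nf
  rw [hslice, deriv_iterate_comp_mul_add]
  funext x; ring_nf

theorem deriv_t_of_travelingWave (hu : ∀ x y t, u x y t = W (c * t + k * x + m * y))
    (x y t : 𝕜) :
    deriv (fun t => u x y t) t = c * deriv W (c * t + k * x + m * y) := by
  have hslice : (fun t => u x y t) = fun t => W (c * t + (k * x + m * y)) := by
    funext t; rw [hu]; ring_nf
  rw [hslice, deriv_comp_mul_add, add_assoc]

theorem deriv_y_of_travelingWave (hu : ∀ x y t, u x y t = W (c * t + k * x + m * y))
    (x y t : 𝕜) :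
    deriv (fun y => u x y t) y = m * deriv W (c * t + k * x + m * y) := by
  have hslice : (fun y => u x y t) = fun y => W (m * y + (c * t + k * x)) := by
    funext y; rw [hu]; ring_nf
  rw [hslice, deriv_comp_mul_add, add_comm _ (m * y)]

theorem sww_residual_of_travelingWave (hu : ∀ x y t, u x y t = W (c * t + k * x + m * y))
    (p q x y t : 𝕜) :
    deriv (fun x' => deriv (fun t' => u x' y t') t) x + deriv (deriv (fun x' => u x' y t)) x
      - (deriv (deriv (deriv (fun x' => deriv (fun y' => u x' y' t) y))) x
        + p * deriv (fun x' => u x' y t) x * deriv (fun x' => deriv (fun t' => u x' y t') t) x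
        + q * deriv (fun t' => u x y t') t * deriv (deriv (fun x' => u x' y t)) x)
    = k * ((c + k) * deriv^[2] W (c * t + k * x + m * y)
        - k ^ 2 * m * deriv^[4] W (c * t + k * x + m * y)
        - (p + q) * k * c * deriv W (c * t + k * x + m * y)
          * deriv^[2] W (c * t + k * x + m * y)) := by
  have hut : ∀ x y t, deriv (fun t' => u x y t') t = c * deriv W (c * t + k * x + m * y) :=
    deriv_t_of_travelingWave hu
  have huy : ∀ x y t, deriv (fun y' => u x y' t) y = m * deriv W (c * t + k * x + m * y) :=
    deriv_y_of_travelingWave hu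
  have huxt : deriv (fun x' => deriv (fun t' => u x' y t') t) x
      = k * (c * deriv^[2] W (c * t + k * x + m * y)) := by
    simpa [deriv_iterate_const_mul] using
      congrFun (deriv_iterate_x_of_travelingWave (W := fun s => c * deriv W s) hut 1 y t) x
  have huxxxy : deriv (deriv (deriv (fun x' => deriv (fun y' => u x' y' t) y))) x
      = k ^ 3 * (m * deriv^[4] W (c * t + k * x + m * y)) := by
    simpa [deriv_iterate_const_mul] using
      congrFun (deriv_iterate_x_of_travelingWave (W := fun s => m * deriv W s) huy 3 y t) x
  have hux : deriv (fun x' => u x' y t) x = k * deriv W (c * t + k * x + m * y) := by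
    simpa using congrFun (deriv_iterate_x_of_travelingWave hu 1 y t) x
  have huxx : deriv (deriv (fun x' => u x' y t)) x = k ^ 2 * deriv^[2] W (c * t + k * x + m * y) :=
    congrFun (deriv_iterate_x_of_travelingWave hu 2 y t) x
  rw [huxt, huxxxy, hux, huxx, hut]
  ring

end TravelingWave

section AutonomousODE

variable {𝕜 : Type*} [NontriviallyNormedField 𝕜]

noncomputable def odeDerivPoly (P : 𝕜[X]) : ℕ → 𝕜[X]
  | 0 => X
  | n + 1 => derivative (odeDerivPoly P n) * P

theorem eqOn_deriv_iterate_odeDerivPoly {I : Set 𝕜} (hI : IsOpen I) {Φ : 𝕜 → 𝕜} {P : 𝕜[X]}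
    (hΦ : ∀ s ∈ I, HasDerivAt Φ (P.eval (Φ s)) s) (n : ℕ) :
    EqOn (deriv^[n] Φ) (fun s => (odeDerivPoly P n).eval (Φ s)) I := by
  induction n with
  | zero => intro s _; simp [odeDerivPoly]
  | succ n ih =>
    intro s hs
    have hloc : deriv^[n] Φ =ᶠ[nhds s] fun s => (odeDerivPoly P n).eval (Φ s) :=
      eventuallyEq_of_mem (hI.mem_nhds hs) ih
    rw [Function.iterate_succ_apply', hloc.deriv_eq]
    exact (((odeDerivPoly P n).hasDerivAt (Φ s)).comp s (hΦ s hs)).deriv.trans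
      (by rw [odeDerivPoly]; exact (eval_mul ..).symm)

theorem deriv_iterate_of_riccati {I : Set 𝕜} (hI : IsOpen I) {Φ : 𝕜 → 𝕜} {σ : 𝕜}
    (hΦ : ∀ s ∈ I, HasDerivAt Φ (σ + Φ s ^ 2) s) {s : 𝕜} (hs : s ∈ I) :
    deriv Φ s = σ + Φ s ^ 2 ∧ deriv^[2] Φ s = 2 * Φ s * (σ + Φ s ^ 2) ∧
      deriv^[4] Φ s = 8 * Φ s * (σ + Φ s ^ 2) * (2 * σ + 3 * Φ s ^ 2) := by
  have hP : ∀ s ∈ I, HasDerivAt Φ ((C σ + X ^ 2).eval (Φ s)) s := by simpa using hΦ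
  have h := fun n => eqOn_deriv_iterate_odeDerivPoly hI hP n hs
  refine ⟨(hΦ s hs).deriv, ?_, ?_⟩ <;>
  · simp only [h, odeDerivPoly, derivative_mul, derivative_add, derivative_X, derivative_C,
      derivative_X_pow, derivative_one, eval_mul, eval_add, eval_pow, eval_X, eval_C, eval_one,
      derivative_zero, eval_zero]
    ring

end AutonomousODE

/-- If Φ solves the Riccati equation Φ' = σ + Φ² on an open set I, c(p+q) ≠ 0 and
c + k + 4σk²m = 0, then u(x,y,t) = a₀ - (12km/(c(p+q)))·Φ(ct+kx+my) satisfies the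
shallow water wave equation u_{xt} + u_{xx} = u_{xxxy} + p·u_x·u_{xt} + q·u_t·u_{xx}
at every point (x,y,t) with ct + kx + my ∈ I. -/
theorem riccati_solution_of_SWW (σ p q k m c a₀ : ℝ)
    (h1 : c * (p + q) ≠ 0) (h2 : c + k + 4 * σ * k ^ 2 * m = 0)
    (I : Set ℝ) (hI : IsOpen I) (Φ : ℝ → ℝ)
    (hΦ : ∀ ξ ∈ I, HasDerivAt Φ (σ + Φ ξ ^ 2) ξ)
    (u : ℝ → ℝ → ℝ → ℝ)
    (hu : ∀ x y t : ℝ,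
      u x y t = a₀ - (12 * k * m / (c * (p + q))) * Φ (c * t + k * x + m * y)) :
    ∀ x y t : ℝ, c * t + k * x + m * y ∈ I →
      deriv (fun x' : ℝ => deriv (fun t' : ℝ => u x' y t') t) x
          + deriv (deriv (fun x' : ℝ => u x' y t)) x =
        deriv (deriv (deriv (fun x' : ℝ => deriv (fun y' : ℝ => u x' y' t) y))) x
          + p * deriv (fun x' : ℝ => u x' y t) x
              * deriv (fun x' : ℝ => deriv (fun t' : ℝ => u x' y t') t) x
          + q * deriv (fun t' : ℝ => u x y t') t
              * deriv (deriv (fun x' : ℝ => u x' y t)) x := by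
  intro x y t hξ
  set A := 12 * k * m / (c * (p + q))
  have hA : A * (c * (p + q)) = 12 * k * m := div_mul_cancel₀ _ h1
  obtain ⟨hΦ1, hΦ2, hΦ4⟩ := deriv_iterate_of_riccati hI hΦ hξ
  rw [← sub_eq_zero, sww_residual_of_travelingWave (W := fun s => a₀ - A * Φ s) hu]
  simp only [deriv_iterate_const_sub_mul two_pos, deriv_iterate_const_sub_mul four_pos,
    deriv_const_sub, deriv_const_mul_field', hΦ1, hΦ2, hΦ4]
  set Φξ := Φ (c * t + k * x + m * y)
  linear_combination (-2 * A * Φξ * (σ + Φξ ^ 2) * k) * h2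
    + (-2 * A * Φξ * (σ + Φξ ^ 2) ^ 2 * k ^ 2) * hA
end

section
/- Let p, q, k, m, c be real numbers with c·(p+q) ≠ 0 and c + k = 4k²m, let a₀ ∈ ℝ, and define u(x,y,t) = a₀ + (12km/(c(p+q)))·coth(ct + kx + my). Then u satisfies the shallow water wave equation u_{xt} + u_{xx} = u_{xxxy} + p·u_x·u_{xt} + q·u_t·u_{xx} at every point (x,y,t) ∈ ℝ³ with ct + kx + my ≠ 0. -/
noncomputable def coth (x : ℝ) : ℝ := Real.cosh x / Real.sinh x

/-!
Write `u = P(coth φ)` with `P = a₀ + A X`, `A = 12 k m / (c (p + q))` and the phase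
`φ = c t + k x + m y`. Since `coth` solves the Riccati equation `w' = 1 - w²`, every partial
derivative of `u` is again a polynomial in `coth φ`: differentiating in a variable whose
coefficient in `φ` is `a` replaces `P` by `a · P' · (1 - X²)`. Both sides of the equation thus
become polynomials in `w = coth φ`, and with `A c (p + q) = 12 k m` and `c + k = 4 k² m` they
agree identically in `w`.
-/

open Polynomial

lemma hasDerivAt_coth {z : ℝ} (hz : z ≠ 0) : HasDerivAt coth (1 - coth z ^ 2) z := by
  have hs : Real.sinh z ≠ 0 := Real.sinh_ne_zero.mpr hz
  refine ((Real.hasDerivAt_cosh z).div (Real.hasDerivAt_sinh z) hs).congr_deriv ?_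
  unfold coth
  field_simp

noncomputable def cothDeriv (P : ℝ[X]) : ℝ[X] := derivative P * (1 - X ^ 2)

lemma hasDerivAt_eval_coth (P : ℝ[X]) {z : ℝ} (hz : z ≠ 0) :
    HasDerivAt (fun w => P.eval (coth w)) ((cothDeriv P).eval (coth z)) z := by
  rw [cothDeriv, eval_mul, eval_sub, eval_one, eval_pow, eval_X]
  exact (P.hasDerivAt (coth z)).comp z (hasDerivAt_coth hz)

lemma deriv_eq_of_eqOn_eval_coth {F φ : ℝ → ℝ} {P : ℝ[X]} {a c₀ : ℝ}
    (hφ : ∀ s, HasDerivAt φ a s) (hF : ∀ s, φ s ≠ 0 → F s = c₀ * P.eval (coth (φ s)))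
    {s : ℝ} (hs : φ s ≠ 0) :
    deriv F s = c₀ * a * (cothDeriv P).eval (coth (φ s)) := by
  have hopen : IsOpen {s | φ s ≠ 0} :=
    isOpen_ne_fun (continuous_iff_continuousAt.mpr fun s => (hφ s).continuousAt) continuous_const
  have hFG : F =ᶠ[nhds s] fun s => c₀ * P.eval (coth (φ s)) :=
    Filter.eventuallyEq_of_mem (hopen.mem_nhds hs) hF
  have hG : HasDerivAt (fun s => c₀ * P.eval (coth (φ s)))
      (c₀ * ((cothDeriv P).eval (coth (φ s)) * a)) s :=
    ((hasDerivAt_eval_coth P hs).comp (h := φ) s (hφ s)).const_mul c₀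
  rw [hFG.deriv_eq, hG.deriv]
  ring

lemma iterate_deriv_eq_of_eqOn_eval_coth {F φ : ℝ → ℝ} {P : ℝ[X]} {a c₀ : ℝ}
    (hφ : ∀ s, HasDerivAt φ a s) (hF : ∀ s, φ s ≠ 0 → F s = c₀ * P.eval (coth (φ s)))
    (n : ℕ) {s : ℝ} (hs : φ s ≠ 0) :
    deriv^[n] F s = c₀ * a ^ n * (cothDeriv^[n] P).eval (coth (φ s)) := by
  induction n generalizing F P c₀ with
  | zero => simpa using hF s hs
  | succ n ih =>
    rw [Function.iterate_succ_apply, Function.iterate_succ_apply,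
      ih fun s hs => deriv_eq_of_eqOn_eval_coth hφ hF hs, pow_succ]
    ring

/-- For c(p+q) ≠ 0 and c + k = 4k²m, the function
u(x,y,t) = a₀ + (12km/(c(p+q)))·coth(ct+kx+my) satisfies the shallow water wave
equation u_{xt} + u_{xx} = u_{xxxy} + p·u_x·u_{xt} + q·u_t·u_{xx} at every point
(x,y,t) with ct + kx + my ≠ 0. -/
theorem coth_solution_of_SWW (p q k m c a₀ : ℝ)
    (h1 : c * (p + q) ≠ 0) (h2 : c + k = 4 * k ^ 2 * m)
    (u : ℝ → ℝ → ℝ → ℝ)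
    (hu : ∀ x y t : ℝ,
      u x y t = a₀ + (12 * k * m / (c * (p + q))) * coth (c * t + k * x + m * y)) :
    ∀ x y t : ℝ, c * t + k * x + m * y ≠ 0 →
      deriv (fun x' : ℝ => deriv (fun t' : ℝ => u x' y t') t) x
          + deriv (deriv (fun x' : ℝ => u x' y t)) x =
        deriv (deriv (deriv (fun x' : ℝ => deriv (fun y' : ℝ => u x' y' t) y))) x
          + p * deriv (fun x' : ℝ => u x' y t) x
              * deriv (fun x' : ℝ => deriv (fun t' : ℝ => u x' y t') t) x
          + q * deriv (fun t' : ℝ => u x y t') t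
              * deriv (deriv (fun x' : ℝ => u x' y t)) x := by
  intro x y t hφ
  set A := 12 * k * m / (c * (p + q))
  set U : ℝ[X] := C a₀ + C A * X
  have hU : ∀ x' y' t', u x' y' t' = 1 * U.eval (coth (c * t' + k * x' + m * y')) := by
    simp [U, hu]
  have hφx : ∀ y' t' s, HasDerivAt (fun x' => c * t' + k * x' + m * y') k s := fun y' t' s => by
    simpa using (((hasDerivAt_id s).const_mul k).const_add (c * t')).add_const (m * y')
  have hφy : ∀ x' t' s, HasDerivAt (fun y' => c * t' + k * x' + m * y') m s := fun x' t' s => by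
    simpa using ((hasDerivAt_id s).const_mul m).const_add (c * t' + k * x')
  have hφt : ∀ x' y' s, HasDerivAt (fun t' => c * t' + k * x' + m * y') c s := fun x' y' s => by
    simpa using (((hasDerivAt_id s).const_mul c).add_const (k * x')).add_const (m * y')
  have u_x : deriv (fun x' => u x' y t) x = _ :=
    iterate_deriv_eq_of_eqOn_eval_coth (hφx y t) (fun x' _ => hU x' y t) 1 hφ
  have u_xx : deriv (deriv (fun x' => u x' y t)) x = _ :=
    iterate_deriv_eq_of_eqOn_eval_coth (hφx y t) (fun x' _ => hU x' y t) 2 hφ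
  have u_t : deriv (fun t' => u x y t') t = _ :=
    iterate_deriv_eq_of_eqOn_eval_coth (hφt x y) (fun t' _ => hU x y t') 1 hφ
  have u_xt : deriv (fun x' => deriv (fun t' => u x' y t') t) x = _ :=
    iterate_deriv_eq_of_eqOn_eval_coth (hφx y t)
      (fun x' hx' => iterate_deriv_eq_of_eqOn_eval_coth (hφt x' y) (fun t' _ => hU x' y t') 1 hx')
      1 hφ
  have u_xxxy : deriv (deriv (deriv (fun x' => deriv (fun y' => u x' y' t) y))) x = _ :=
    iterate_deriv_eq_of_eqOn_eval_coth (hφx y t)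
      (fun x' hx' => iterate_deriv_eq_of_eqOn_eval_coth (hφy x' t) (fun y' _ => hU x' y' t) 1 hx')
      3 hφ
  have hA : A * (c * (p + q)) = 12 * k * m := div_mul_cancel₀ _ h1
  rw [u_x, u_xx, u_t, u_xt, u_xxxy]
  set w := coth (c * t + k * x + m * y)
  simp only [U, cothDeriv, Function.iterate_succ, Function.iterate_zero, Function.comp_apply, id,
    derivative_add, derivative_sub, derivative_mul, derivative_C, derivative_X, derivative_one,
    derivative_X_sq, derivative_zero, eval_add, eval_sub, eval_mul, eval_C, eval_X, eval_one,
    eval_pow, eval_zero]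
  linear_combination (A * k * (-2 * w * (1 - w ^ 2))) * h2
    - (A * k ^ 2 * (1 - w ^ 2) * (-2 * w * (1 - w ^ 2))) * hA
end

section
/- Let σ, k, c be real numbers with k ≠ 0, let I ⊆ ℝ be an open set, and let Φ : ℝ → ℝ be differentiable on I with Φ'(ξ) = σ + Φ(ξ)² for all ξ ∈ I. Define u(x,t) = (c² - 8σk⁴ - k²)/(6k²) - 2k²·Φ(ct + kx)². Then u satisfies the fourth-order Boussinesq equation u_{tt} = u_{xx} + 3·(u²)_{xx} + u_{xxxx} at every point (x,t) with ct + kx ∈ I. -/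
/-!
Along a solution of an autonomous polynomial ODE `Φ' = R(Φ)`, the derivative of `P(Φ)` is
`(D P)(Φ)`, where `D = P ↦ P' · R` is the derivation of `𝕜[X]` sending `X` to `R`. Since `u` is the
polynomial `U = A - 2k²X²` evaluated at `Φ(ct + kx)`, the Boussinesq equation becomes the
travelling-wave identity `c² D²U = k² D²U + 3k² D²(U²) + k⁴ D⁴U` for the Riccati field
`R = σ + X²`. This is `D²` applied to the first integral
`(c² - k²) U - 3k² U² - k⁴ D²U = const`, a direct computation given the choice of `A`.
-/

open Polynomial

namespace Polynomial

variable {𝕜 : Type*} [NontriviallyNormedField 𝕜] {R : 𝕜[X]} {Φ : 𝕜 → 𝕜}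

theorem hasDerivAt_eval_comp {ξ : 𝕜} (hΦ : HasDerivAt Φ (R.eval (Φ ξ)) ξ)
    (P : 𝕜[X]) :
    HasDerivAt (fun s => P.eval (Φ s)) ((mkDerivation 𝕜 R P).eval (Φ ξ)) ξ := by
  rw [mkDerivation_apply, smul_eq_mul, eval_mul]
  exact (P.hasDerivAt (Φ ξ)).comp ξ hΦ

theorem iterate_deriv_eval_comp {I : Set 𝕜} (hI : IsOpen I)
    (hΦ : ∀ ξ ∈ I, HasDerivAt Φ (R.eval (Φ ξ)) ξ) {ℓ : 𝕜 → 𝕜} {a : 𝕜}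
    (hℓ : ∀ s, HasDerivAt ℓ a s) (P : 𝕜[X]) (n : ℕ) {s : 𝕜} (hs : ℓ s ∈ I) :
    deriv^[n] (fun s => P.eval (Φ (ℓ s))) s
      = a ^ n * ((mkDerivation 𝕜 R)^[n] P).eval (Φ (ℓ s)) := by
  induction n generalizing s with
  | zero => simp
  | succ n ih =>
    have hpre : IsOpen (ℓ ⁻¹' I) :=
      hI.preimage (continuous_iff_continuousAt.2 fun s => (hℓ s).continuousAt)
    have heq : deriv^[n] (fun s => P.eval (Φ (ℓ s)))
        =ᶠ[nhds s] fun s => a ^ n * ((mkDerivation 𝕜 R)^[n] P).eval (Φ (ℓ s)) :=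
      Filter.eventuallyEq_of_mem (hpre.mem_nhds hs) fun s' hs' => ih hs'
    rw [Function.iterate_succ_apply', heq.deriv_eq, Function.iterate_succ_apply']
    have hcomp := ((hasDerivAt_eval_comp (hΦ _ hs)
      ((mkDerivation 𝕜 R)^[n] P)).comp s (hℓ s)).const_mul (a ^ n)
    exact hcomp.deriv.trans (by ring)

end Polynomial

noncomputable def boussinesqProfile (k A : ℝ) : ℝ[X] := C A - C (2 * k ^ 2) * X ^ 2

section

variable {σ k c A : ℝ} (hA : 6 * k ^ 2 * A = c ^ 2 - 8 * σ * k ^ 4 - k ^ 2)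
include hA

local notation "D" => mkDerivation ℝ (C σ + X ^ 2)

theorem boussinesqProfile_first_integral :
    (c ^ 2 - k ^ 2) • boussinesqProfile k A - (3 * k ^ 2) • boussinesqProfile k A ^ 2
        - k ^ 4 • D (D (boussinesqProfile k A))
      = C ((c ^ 2 - k ^ 2) * A - 3 * k ^ 2 * A ^ 2 + 4 * k ^ 6 * σ ^ 2) := by
  refine Polynomial.funext fun φ => ?_
  simp only [boussinesqProfile, mkDerivation_apply, smul_eq_mul, derivative_add, derivative_sub,
    derivative_mul, derivative_C, derivative_X_pow, derivative_zero, eval_add, eval_sub, eval_mul,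
    eval_smul, eval_pow, eval_C, eval_X, eval_zero]
  linear_combination 2 * k ^ 2 * φ ^ 2 * hA

theorem boussinesqProfile_reduction (φ : ℝ) :
    c ^ 2 * (D^[2] (boussinesqProfile k A)).eval φ
      = k ^ 2 * (D^[2] (boussinesqProfile k A)).eval φ
        + 3 * (k ^ 2 * (D^[2] (boussinesqProfile k A ^ 2)).eval φ)
        + k ^ 4 * (D^[4] (boussinesqProfile k A)).eval φ := by
  have h := congrArg (fun Q => (D (D Q)).eval φ) (boussinesqProfile_first_integral hA)
  simp only [map_sub, Derivation.map_smul, derivation_C, map_zero, eval_sub, eval_smul, eval_zero,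
    smul_eq_mul] at h
  simp only [Function.iterate_succ, Function.iterate_zero, Function.comp_apply, id]
  linear_combination h

end

/-- If Φ solves the Riccati equation Φ' = σ + Φ² on an open set I and k ≠ 0, then
u(x,t) = (c²-8σk⁴-k²)/(6k²) - 2k²·Φ(ct+kx)² satisfies the fourth-order Boussinesq
equation u_{tt} = u_{xx} + 3·(u²)_{xx} + u_{xxxx} at every point with ct + kx ∈ I. -/
theorem riccati_solution_of_Boussinesq (σ k c : ℝ) (hk : k ≠ 0)
    (I : Set ℝ) (hI : IsOpen I) (Φ : ℝ → ℝ)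
    (hΦ : ∀ ξ ∈ I, HasDerivAt Φ (σ + Φ ξ ^ 2) ξ)
    (u : ℝ → ℝ → ℝ)
    (hu : ∀ x t : ℝ,
      u x t = (c ^ 2 - 8 * σ * k ^ 4 - k ^ 2) / (6 * k ^ 2)
        - 2 * k ^ 2 * Φ (c * t + k * x) ^ 2) :
    ∀ x t : ℝ, c * t + k * x ∈ I →
      deriv (deriv (fun t' : ℝ => u x t')) t =
        deriv (deriv (fun x' : ℝ => u x' t)) x
          + 3 * deriv (deriv (fun x' : ℝ => (u x' t) ^ 2)) x
          + deriv (deriv (deriv (deriv (fun x' : ℝ => u x' t)))) x := by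
  intro x t hmem
  set A := (c ^ 2 - 8 * σ * k ^ 4 - k ^ 2) / (6 * k ^ 2)
  have hA : 6 * k ^ 2 * A = c ^ 2 - 8 * σ * k ^ 4 - k ^ 2 := by
    simp only [A]; field_simp
  have hR : ∀ ξ ∈ I, HasDerivAt Φ ((C σ + X ^ 2 : ℝ[X]).eval (Φ ξ)) ξ := by simpa using hΦ
  set U := boussinesqProfile k A
  have hut : (fun t' => u x t') = fun t' => U.eval (Φ (c * t' + k * x)) :=
    funext fun t' => by simp [U, boussinesqProfile, hu]
  have hux : (fun x' => u x' t) = fun x' => U.eval (Φ (c * t + k * x')) :=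
    funext fun x' => by simp [U, boussinesqProfile, hu]
  have hux2 : (fun x' => u x' t ^ 2) = fun x' => (U ^ 2).eval (Φ (c * t + k * x')) :=
    funext fun x' => by rw [eval_pow, ← congrFun hux]
  have hℓt : ∀ s, HasDerivAt (fun t' => c * t' + k * x) c s := fun s => by
    simpa using ((hasDerivAt_id s).const_mul c).add_const (k * x)
  have hℓx : ∀ s, HasDerivAt (fun x' => c * t + k * x') k s := fun s => by
    simpa using ((hasDerivAt_id s).const_mul k).const_add (c * t)
  rw [hut, hux, hux2]
  change deriv^[2] _ t = deriv^[2] _ x + 3 * deriv^[2] _ x + deriv^[4] _ x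
  rw [iterate_deriv_eval_comp hI hR hℓt U 2 hmem, iterate_deriv_eval_comp hI hR hℓx U 2 hmem,
    iterate_deriv_eval_comp hI hR hℓx (U ^ 2) 2 hmem, iterate_deriv_eval_comp hI hR hℓx U 4 hmem]
  exact boussinesqProfile_reduction hA _
end

section
/- Let k, c be real numbers with k ≠ 0, and define u(x,t) = (c² - 8k⁴ - k²)/(6k²) - 2k²·tan²(ct + kx). Then u satisfies the fourth-order Boussinesq equation u_{tt} = u_{xx} + 3·(u²)_{xx} + u_{xxxx} at every point (x,t) ∈ ℝ² with cos(ct + kx) ≠ 0. -/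
/-!
Along the phase θ = ct + kx every derivative of a polynomial in tan θ is again a polynomial in
tan θ, because tan' = 1 + tan². So u, u² and all their t- and x-derivatives are polynomials in
T = tan θ, with a factor c (resp. k) per derivative, and the equation becomes a polynomial
identity in T; the constant term (c² - 8k⁴ - k²)/(6k²) of u is exactly what makes it hold.
-/

open Polynomial Real Filter

/-- `d/dθ p(tan θ) = (tanDerivative p)(tan θ)`, since tan' = 1 + tan². -/
noncomputable def tanDerivative (p : ℝ[X]) : ℝ[X] :=
  derivative p * (1 + X ^ 2)

theorem hasDerivAt_eval_tan_comp {θ : ℝ → ℝ} {a y : ℝ} (hθ : HasDerivAt θ a y)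
    (hy : cos (θ y) ≠ 0) (p : ℝ[X]) :
    HasDerivAt (fun z => p.eval (tan (θ z))) (a * (tanDerivative p).eval (tan (θ y))) y := by
  have h := (p.hasDerivAt (tan (θ y))).comp y ((hasDerivAt_tan hy).comp y hθ)
  refine h.congr_deriv ?_
  rw [one_div, ← inv_one_add_tan_sq hy, inv_inv]
  simp only [tanDerivative, eval_mul, eval_add, eval_one, eval_pow, eval_X]
  ring

theorem iterate_deriv_eval_tan_comp {θ : ℝ → ℝ} {a : ℝ} (hθ : ∀ y, HasDerivAt θ a y)
    (p : ℝ[X]) (n : ℕ) {y : ℝ} (hy : cos (θ y) ≠ 0) :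
    deriv^[n] (fun z => p.eval (tan (θ z))) y = a ^ n * (tanDerivative^[n] p).eval (tan (θ y)) := by
  induction n generalizing y with
  | zero => simp
  | succ n ih =>
    have hopen : IsOpen {z | cos (θ z) ≠ 0} :=
      isOpen_ne.preimage (continuous_cos.comp
        (continuous_iff_continuousAt.2 fun z => (hθ z).continuousAt))
    have hnear : deriv^[n] (fun z => p.eval (tan (θ z)))
        =ᶠ[nhds y] fun z => a ^ n * (tanDerivative^[n] p).eval (tan (θ z)) :=
      eventually_of_mem (hopen.mem_nhds hy) fun z hz => ih hz
    rw [Function.iterate_succ_apply', hnear.deriv_eq,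
      ((hasDerivAt_eval_tan_comp (hθ y) hy _).const_mul (a ^ n)).deriv,
      Function.iterate_succ_apply']
    ring

/-- For k ≠ 0, u(x,t) = (c²-8k⁴-k²)/(6k²) - 2k²·tan²(ct+kx) satisfies the
fourth-order Boussinesq equation u_{tt} = u_{xx} + 3·(u²)_{xx} + u_{xxxx} at every
point (x,t) with cos(ct+kx) ≠ 0. -/
theorem tan_solution_of_Boussinesq (k c : ℝ) (hk : k ≠ 0) (u : ℝ → ℝ → ℝ)
    (hu : ∀ x t : ℝ,
      u x t = (c ^ 2 - 8 * k ^ 4 - k ^ 2) / (6 * k ^ 2)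
        - 2 * k ^ 2 * Real.tan (c * t + k * x) ^ 2) :
    ∀ x t : ℝ, Real.cos (c * t + k * x) ≠ 0 →
      deriv (deriv (fun t' : ℝ => u x t')) t =
        deriv (deriv (fun x' : ℝ => u x' t)) x
          + 3 * deriv (deriv (fun x' : ℝ => (u x' t) ^ 2)) x
          + deriv (deriv (deriv (deriv (fun x' : ℝ => u x' t)))) x := by
  intro x t hcos
  set p : ℝ[X] := C ((c ^ 2 - 8 * k ^ 4 - k ^ 2) / (6 * k ^ 2)) - C (2 * k ^ 2) * X ^ 2
  have hu_t : (fun t' => u x t') = fun t' => p.eval (tan (c * t' + k * x)) := by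
    ext t'; simp [p, hu]
  have hu_x : (fun x' => u x' t) = fun x' => p.eval (tan (c * t + k * x')) := by
    ext x'; simp [p, hu]
  have hu_sq_x : (fun x' => u x' t ^ 2) = fun x' => (p ^ 2).eval (tan (c * t + k * x')) := by
    ext x'; simp [p, hu]
  have hθ_t : ∀ t', HasDerivAt (fun t' => c * t' + k * x) c t' := fun t' => by
    simpa using ((hasDerivAt_id t').const_mul c).add_const (k * x)
  have hθ_x : ∀ x', HasDerivAt (fun x' => c * t + k * x') k x' := fun x' => by
    simpa using ((hasDerivAt_id x').const_mul k).const_add (c * t)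
  change deriv^[2] _ t = deriv^[2] _ x + 3 * deriv^[2] _ x + deriv^[4] _ x
  rw [hu_t, hu_x, hu_sq_x, iterate_deriv_eval_tan_comp hθ_t _ _ hcos,
    iterate_deriv_eval_tan_comp hθ_x _ _ hcos, iterate_deriv_eval_tan_comp hθ_x _ _ hcos,
    iterate_deriv_eval_tan_comp hθ_x _ _ hcos]
  simp only [p, Function.iterate_succ_apply', Function.iterate_zero_apply, tanDerivative,
    derivative_mul, derivative_sub, derivative_add, derivative_C, derivative_X, derivative_one,
    derivative_zero, derivative_sq, eval_mul, eval_sub, eval_add, eval_pow, eval_C, eval_X,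
    eval_one, eval_zero]
  field_simp
  ring
end
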